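/- arXiv:2103.12923 — 3 statements merged into one kernel-verified Lean document; each statement's English description precedes it below -/
import Mathlib

section
/- Let Σ be a symmetric positive definite d×d matrix and M a symmetric positive semidefinite d×d matrix, and set Σ' = Σ + M. If det(Σ') ≤ 4·det(Σ), then ln det(Σ') ≥ ln det(Σ) + (1/3)·tr(M Σ⁻¹). -/
open Matrix

lemma log_one_add_ge_third {x : ℝ} (hx0 : 0 ≤ x) (hx3 : x ≤ 3) :
    x / 3 ≤ Real.log (1 + x) := by
  have hc : ConcaveOn ℝ (Set.Ioi (0:ℝ)) Real.log := strictConcaveOn_log_Ioi.concaveOn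
  have h := hc.2 (Set.mem_Ioi.mpr (by norm_num : (0:ℝ) < 1))
    (Set.mem_Ioi.mpr (by norm_num : (0:ℝ) < 4))
    (show (0:ℝ) ≤ 1 - x / 3 by linarith) (show (0:ℝ) ≤ x / 3 by linarith)
    (show (1 - x / 3) + x / 3 = 1 by ring)
  have harg : (1 - x / 3) • (1:ℝ) + (x / 3) • (4:ℝ) = 1 + x := by
    simp only [smul_eq_mul]; ring
  rw [harg] at h
  have hlog4 : (1:ℝ) ≤ Real.log 4 := by
    rw [Real.le_log_iff_exp_le (by norm_num : (0:ℝ) < 4)]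
    have := Real.exp_one_lt_d9
    linarith
  simp only [Real.log_one, smul_eq_mul, mul_zero, zero_add] at h
  nlinarith

lemma logdet_key {d : ℕ} {S : Matrix (Fin d) (Fin d) ℝ} (hS : S.PosSemidef)
    (h4 : (1 + S).det ≤ 4) : S.trace / 3 ≤ Real.log (1 + S).det := by
  set U := (hS.1.eigenvectorUnitary : Matrix (Fin d) (Fin d) ℝ) with hU
  set lam := hS.1.eigenvalues with hlam
  have hUU : U * star U = 1 := (Matrix.mem_unitaryGroup_iff).mp hS.1.eigenvectorUnitary.2
  have hUU' : star U * U = 1 := (Matrix.mem_unitaryGroup_iff').mp hS.1.eigenvectorUnitary.2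
  have hspec : S = U * diagonal lam * star U := by
    have := hS.1.spectral_theorem
    simpa using this
  have h1 : (1 : Matrix (Fin d) (Fin d) ℝ) + S = U * (1 + diagonal lam) * star U := by
    rw [mul_add, add_mul, mul_one, hUU, ← hspec]
  have hdet : (1 + S).det = ∏ i, (1 + lam i) := by
    rw [h1, det_mul_right_comm, hUU, one_mul, ← diagonal_one, diagonal_add, det_diagonal]
  have htr : S.trace = ∑ i, lam i := by
    rw [hspec, trace_mul_cycle, hUU', one_mul, trace_diagonal]
  have hl0 : ∀ i, 0 ≤ lam i := hS.eigenvalues_nonneg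
  have hl3 : ∀ i, lam i ≤ 3 := by
    intro i
    have hprodge : ∀ s : Finset (Fin d), (1:ℝ) ≤ ∏ j ∈ s, (1 + lam j) := fun s => by
      calc (1:ℝ) = ∏ _j ∈ s, (1:ℝ) := by simp
      _ ≤ ∏ j ∈ s, (1 + lam j) :=
        Finset.prod_le_prod (fun j _ => by norm_num) (fun j _ => by linarith [hl0 j])
    have hle : 1 + lam i ≤ ∏ j, (1 + lam j) := by
      rw [← Finset.mul_prod_erase Finset.univ _ (Finset.mem_univ i)]
      exact le_mul_of_one_le_right (by linarith [hl0 i]) (hprodge _)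
    rw [← hdet] at hle
    linarith
  rw [hdet, Real.log_prod (fun i _ => ne_of_gt (by linarith [hl0 i])), htr, Finset.sum_div]
  exact Finset.sum_le_sum fun i _ => log_one_add_ge_third (hl0 i) (hl3 i)

/-- Trace-to-logdet: if `Sig` is SPD, `M` is PSD and `det (Sig + M) ≤ 4 det Sig`,
then `ln det (Sig + M) ≥ ln det Sig + (1/3) tr (M Sig⁻¹)`. -/
theorem logdet_ge_trace {d : ℕ} (Sig M : Matrix (Fin d) (Fin d) ℝ)
    (hSig : Sig.PosDef) (hM : M.PosSemidef)
    (hdet : (Sig + M).det ≤ 4 * Sig.det) :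
    Real.log Sig.det + (1 / 3) * (M * Sig⁻¹).trace ≤ Real.log (Sig + M).det := by
  have hR : (open MatrixOrder in CFC.sqrt Sig).PosSemidef :=
    open MatrixOrder in (CFC.sqrt_nonneg Sig).posSemidef
  set R := (open MatrixOrder in CFC.sqrt Sig) with hRdef
  have hRR : R * R = Sig :=
    open MatrixOrder in CFC.sqrt_mul_sqrt_self Sig hSig.posSemidef.nonneg
  have hdetSig : 0 < Sig.det := hSig.det_pos
  have hdetR : R.det ≠ 0 := by
    intro h
    rw [← hRR, det_mul, h, mul_zero] at hdetSig
    exact lt_irrefl _ hdetSig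
  have hRu : IsUnit R.det := isUnit_iff_ne_zero.mpr hdetR
  have hRiH : (R⁻¹)ᴴ = R⁻¹ := hR.1.inv
  set S := R⁻¹ * M * R⁻¹ with hSdef
  have hS : S.PosSemidef := by
    have := hM.mul_mul_conjTranspose_same R⁻¹
    rwa [hRiH] at this
  have hRSR : R * S * R = M := by
    rw [hSdef]
    simp only [← Matrix.mul_assoc]
    rw [Matrix.mul_nonsing_inv _ hRu, one_mul, Matrix.mul_assoc,
      Matrix.nonsing_inv_mul _ hRu, mul_one]
  have hsum : Sig + M = R * (1 + S) * R := by
    rw [mul_add, add_mul, mul_one, hRR, hRSR]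
  have hdet2 : (Sig + M).det = Sig.det * (1 + S).det := by
    rw [hsum, det_mul_right_comm, det_mul, det_mul, ← det_mul, hRR]
  have htr : (M * Sig⁻¹).trace = S.trace := by
    rw [← hRR, Matrix.mul_inv_rev, ← Matrix.mul_assoc, trace_mul_cycle]
  have h1S : (1 + S).PosDef := Matrix.PosDef.add_posSemidef Matrix.PosDef.one hS
  have h1Sdet : 0 < (1 + S).det := h1S.det_pos
  have h4 : (1 + S).det ≤ 4 := by
    rw [hdet2] at hdet
    nlinarith
  have hkey := logdet_key hS h4
  rw [hdet2, Real.log_mul (ne_of_gt hdetSig) (ne_of_gt h1Sdet), htr]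
  linarith
end

section
/- Exponentiated-weights (softmax/NPG) regret bound: Let A be a finite set, K ≥ 4·ln|A|, and let Â_k: A → ℝ satisfy |Â_k(a)| ≤ W for all k = 0,...,K−1 and a ∈ A, with E_{a∼π_k}[Â_k(a)] = 0 for each k (advantage property). Starting from π_0 = Unif(A) and updating π_{k+1}(a) ∝ π_k(a)·e^{η·Â_k(a)} with η = √(ln|A|)/(√K·W), for any fixed distribution π̃ over A: ∑_{k=0}^{K−1} E_{a∼π̃}[Â_k(a)] ≤ 2W·√(ln|A|·K). -/
/-!
Track the potential `Φ k = ∑ a, π̃ a * log (π k a)`. Taking logarithms in the update rule gives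
`Φ (k + 1) - Φ k = η E_{π̃} Â_k - log z_k`, so `η` times the regret telescopes to
`Φ K - Φ 0 + ∑ log z_k`. Here `Φ K ≤ 0`, `-Φ 0 = log |A|` for the uniform start, and
`e^x ≤ 1 + x + x²` on `[-1, 1]` together with `E_{π_k} Â_k = 0` gives `log z_k ≤ η² W²`.
The choice of `η` balances `log |A| / η` against `K η W²`.
-/

namespace Real

open Finset

theorem log_sum_mul_exp_le {ι : Type*} [Fintype ι] {p x : ι → ℝ} (hp : ∀ i, 0 ≤ p i)
    (hp_sum : ∑ i, p i = 1) (hx : ∀ i, |x i| ≤ 1) :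
    log (∑ i, p i * exp (x i)) ≤ ∑ i, p i * x i + ∑ i, p i * x i ^ 2 := by
  have hexp : ∀ i, exp (x i) ≤ 1 + x i + x i ^ 2 := fun i ↦ by
    linarith [(abs_le.mp (abs_exp_sub_one_sub_id_le (hx i))).2]
  have hz : ∑ i, p i * exp (x i) ≤ 1 + ∑ i, p i * x i + ∑ i, p i * x i ^ 2 := calc
    ∑ i, p i * exp (x i) ≤ ∑ i, p i * (1 + x i + x i ^ 2) :=
      sum_le_sum fun i _ ↦ mul_le_mul_of_nonneg_left (hexp i) (hp i)
    _ = 1 + ∑ i, p i * x i + ∑ i, p i * x i ^ 2 := by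
      simp only [mul_add, mul_one, sum_add_distrib, hp_sum]
  have hz_pos : 0 < ∑ i, p i * exp (x i) := by
    obtain ⟨i, -, hi⟩ := exists_lt_of_sum_lt (by simp [hp_sum] : ∑ _i : ι, (0 : ℝ) < ∑ i, p i)
    exact sum_pos' (fun j _ ↦ mul_nonneg (hp j) (exp_pos _).le)
      ⟨i, mem_univ i, mul_pos hi (exp_pos _)⟩
  linarith [log_le_sub_one_of_pos hz_pos]

theorem log_sum_mul_exp_mul_le_of_sum_mul_eq_zero {ι : Type*} [Fintype ι] {p g : ι → ℝ}
    {η W : ℝ} (hp : ∀ i, 0 ≤ p i) (hp_sum : ∑ i, p i = 1) (hg_mean : ∑ i, p i * g i = 0)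
    (hg : ∀ i, |g i| ≤ W) (hηW : |η| * W ≤ 1) :
    log (∑ i, p i * exp (η * g i)) ≤ η ^ 2 * W ^ 2 := by
  have hsq : ∀ i, (η * g i) ^ 2 ≤ η ^ 2 * W ^ 2 := fun i ↦ by
    rw [mul_pow]
    exact mul_le_mul_of_nonneg_left (sq_le_sq' (abs_le.mp (hg i)).1 (abs_le.mp (hg i)).2)
      (sq_nonneg η)
  calc log (∑ i, p i * exp (η * g i))
      ≤ ∑ i, p i * (η * g i) + ∑ i, p i * (η * g i) ^ 2 :=
        log_sum_mul_exp_le hp hp_sum fun i ↦ by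
          rw [abs_mul]
          exact le_trans (mul_le_mul_of_nonneg_left (hg i) (abs_nonneg η)) hηW
    _ ≤ 0 + ∑ i, p i * (η ^ 2 * W ^ 2) := by
        gcongr with i
        · simp only [mul_left_comm (p _) η, ← mul_sum, hg_mean, mul_zero, le_refl]
        · exact hp i
        · exact hsq i
    _ = η ^ 2 * W ^ 2 := by rw [← sum_mul, hp_sum, zero_add, one_mul]

end Real

section ExpWeights

open Real Finset

variable {ι : Type*} [Fintype ι]

theorem sum_mul_eq_sum_mul_of_subsingleton [Subsingleton ι] [Nonempty ι] {p q g : ι → ℝ}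
    (hp : ∑ i, p i = 1) (hq : ∑ i, q i = 1) : ∑ i, q i * g i = ∑ i, p i * g i := by
  obtain ⟨a⟩ := ‹Nonempty ι›
  simp only [Fintype.sum_subsingleton _ a] at hp hq ⊢
  rw [hp, hq]

theorem sum_mul_exp_pos [Nonempty ι] {p x : ι → ℝ} (hp : ∀ i, 0 < p i) :
    0 < ∑ i, p i * exp (x i) :=
  sum_pos (fun i _ ↦ mul_pos (hp i) (exp_pos _)) univ_nonempty

def IsExpWeights (η : ℝ) (g p : ℕ → ι → ℝ) : Prop :=
  ∀ k i, p (k + 1) i = p k i * exp (η * g k i) / ∑ j, p k j * exp (η * g k j)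

namespace IsExpWeights

variable {η : ℝ} {g p : ℕ → ι → ℝ}

theorem pos (h : IsExpWeights η g p) (h0 : ∀ i, 0 < p 0 i) : ∀ k i, 0 < p k i := by
  intro k
  induction k with
  | zero => exact h0
  | succ k ih =>
    intro i
    have : Nonempty ι := ⟨i⟩
    rw [h]
    exact div_pos (mul_pos (ih i) (exp_pos _)) (sum_mul_exp_pos ih)

theorem sum_eq_one [Nonempty ι] (h : IsExpWeights η g p) (hpos : ∀ k i, 0 < p k i)
    (h0 : ∑ i, p 0 i = 1) : ∀ k, ∑ i, p k i = 1
  | 0 => h0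
  | k + 1 => by
    simp only [h k, ← sum_div]
    exact div_self (sum_mul_exp_pos (hpos k)).ne'

theorem log_succ (h : IsExpWeights η g p) (hpos : ∀ k i, 0 < p k i) (k : ℕ) (i : ι) :
    log (p (k + 1) i) = log (p k i) + η * g k i - log (∑ j, p k j * exp (η * g k j)) := by
  have : Nonempty ι := ⟨i⟩
  rw [h, log_div (mul_pos (hpos k i) (exp_pos _)).ne' (sum_mul_exp_pos (hpos k)).ne',
    log_mul (hpos k i).ne' (exp_pos _).ne', log_exp]

theorem mul_regret_eq (h : IsExpWeights η g p) (hpos : ∀ k i, 0 < p k i) {q : ι → ℝ}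
    (hq_sum : ∑ i, q i = 1) (K : ℕ) :
    η * ∑ k ∈ range K, ∑ i, q i * g k i =
      ∑ i, q i * log (p K i) - ∑ i, q i * log (p 0 i) +
        ∑ k ∈ range K, log (∑ j, p k j * exp (η * g k j)) := by
  induction K with
  | zero => simp
  | succ K ih =>
    simp only [sum_range_succ, mul_add, ih, h.log_succ hpos, mul_add, mul_sub, sum_add_distrib,
      sum_sub_distrib, ← sum_mul, hq_sum, ← mul_sum, mul_left_comm _ η]
    ring

theorem mul_regret_le (h : IsExpWeights η g p) (hpos : ∀ k i, 0 < p k i)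
    (hsum : ∀ k, ∑ i, p k i = 1) {q : ι → ℝ} (hq : ∀ i, 0 ≤ q i) (hq_sum : ∑ i, q i = 1)
    (K : ℕ) :
    η * ∑ k ∈ range K, ∑ i, q i * g k i ≤
      -∑ i, q i * log (p 0 i) + ∑ k ∈ range K, log (∑ j, p k j * exp (η * g k j)) := by
  have hK : ∑ i, q i * log (p K i) ≤ 0 := sum_nonpos fun i _ ↦
    mul_nonpos_of_nonneg_of_nonpos (hq i) <| log_nonpos (hpos K i).le <|
      hsum K ▸ single_le_sum (fun j _ ↦ (hpos K j).le) (mem_univ i)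
  linarith [h.mul_regret_eq hpos hq_sum K]

end IsExpWeights

end ExpWeights

theorem le_two_mul_sqrt_of_mul_le {L K W η R : ℝ} (hL : 0 < L) (hK : 0 < K) (hW : 0 < W)
    (hη : η = √L / (√K * W)) (h : η * R ≤ L + K * (η ^ 2 * W ^ 2)) :
    R ≤ 2 * W * √(L * K) := by
  have hη_pos : 0 < η := by rw [hη]; positivity
  have hKη : K * (η ^ 2 * W ^ 2) = L := by
    rw [hη, div_pow, mul_pow, Real.sq_sqrt hL.le, Real.sq_sqrt hK.le]
    field_simp
  have hη_bound : η * (2 * W * √(L * K)) = 2 * L := by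
    rw [hη, Real.sqrt_mul hL.le]
    field_simp
    rw [Real.sq_sqrt hL.le]
  refine le_of_mul_le_mul_left ?_ hη_pos
  linarith

/-- Exponentiated-weights (softmax/NPG) regret bound. -/
theorem npg_regret {A : Type*} [Fintype A] [Nonempty A]
    (K : ℕ) (W η : ℝ) (hW : 0 < W)
    (hK : 4 * Real.log (Fintype.card A) ≤ (K : ℝ))
    (Ahat : ℕ → A → ℝ) (hbound : ∀ k a, |Ahat k a| ≤ W)
    (π : ℕ → A → ℝ)
    (hπ0 : ∀ a, π 0 a = 1 / (Fintype.card A : ℝ))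
    (hπsucc : ∀ k a, π (k + 1) a =
      π k a * Real.exp (η * Ahat k a) / ∑ a', π k a' * Real.exp (η * Ahat k a'))
    (hadv : ∀ k, ∑ a, π k a * Ahat k a = 0)
    (hη : η = Real.sqrt (Real.log (Fintype.card A)) / (Real.sqrt K * W))
    (πt : A → ℝ) (hπt_nonneg : ∀ a, 0 ≤ πt a) (hπt_sum : ∑ a, πt a = 1) :
    ∑ k ∈ Finset.range K, ∑ a, πt a * Ahat k a ≤
      2 * W * Real.sqrt (Real.log (Fintype.card A) * K) := by
  rcases K.eq_zero_or_pos with rfl | hK_pos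
  · simp only [Finset.range_zero, Finset.sum_empty]
    positivity
  have hπ : IsExpWeights η Ahat π := hπsucc
  have hpos := hπ.pos fun a ↦ by rw [hπ0]; positivity
  have hsum := hπ.sum_eq_one hpos (by simp [hπ0])
  rcases le_or_gt (Fintype.card A) 1 with hN | hN
  · have : Subsingleton A := Fintype.card_le_one_iff_subsingleton.mp hN
    have hregret k := (sum_mul_eq_sum_mul_of_subsingleton (g := Ahat k) (hsum k) hπt_sum).trans
      (hadv k)
    simp only [hregret, Finset.sum_const_zero]
    positivity
  have hL : 0 < Real.log (Fintype.card A) := Real.log_pos (by exact_mod_cast hN)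
  have hK_real : (0 : ℝ) < K := by exact_mod_cast hK_pos
  have hηW : |η| * W ≤ 1 := by
    rw [abs_of_nonneg (by rw [hη]; positivity), hη, div_mul_eq_mul_div,
      mul_div_mul_right _ _ hW.ne']
    exact div_le_one_of_le₀ (Real.sqrt_le_sqrt (by linarith)) (Real.sqrt_nonneg _)
  have hlogz k := Real.log_sum_mul_exp_mul_le_of_sum_mul_eq_zero (fun a ↦ (hpos k a).le)
    (hsum k) (hadv k) (hbound k) hηW
  have hentropy : -∑ a, πt a * Real.log (π 0 a) = Real.log (Fintype.card A) := by
    simp only [hπ0, one_div, Real.log_inv, mul_neg, Finset.sum_neg_distrib, neg_neg,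
      ← Finset.sum_mul, hπt_sum, one_mul]
  refine le_two_mul_sqrt_of_mul_le hL hK_real hW hη ?_
  calc η * ∑ k ∈ Finset.range K, ∑ a, πt a * Ahat k a
      ≤ Real.log (Fintype.card A) +
          ∑ k ∈ Finset.range K, Real.log (∑ a, π k a * Real.exp (η * Ahat k a)) :=
        hentropy ▸ hπ.mul_regret_le hpos hsum hπt_nonneg hπt_sum K
    _ ≤ Real.log (Fintype.card A) + K * (η ^ 2 * W ^ 2) := by
        grw [Finset.sum_le_sum fun k _ ↦ hlogz k]
        simp
end

section
/- Potential argument with lazy updates: Let Σ̂_1 = λI with λ ≥ 1, let φ_1,...,φ_N ∈ ℝ^d with ‖φ_n‖₂ ≤ 1, set Σ̂_{n+1} = Σ̂_n + φ_n φ_nᵀ, and let σ(n) ≤ n be 'switch points' such that the determinant only grows by a factor at most 4 between consecutive switches: det(Σ̂_{n_{i+1}}) ≤ 4·det(Σ̂_{n_i}) for consecutive switch indices and det(Σ̂_{N+1}) ≤ 4·det(Σ̂_{n_last}). Then ∑_{n=1}^N φ_nᵀ Σ̂_{σ(n)}⁻¹ φ_n ≤ 3·(ln det(Σ̂_{N+1})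 − ln det(Σ̂_1)). -/
/-!
Write `σ(n) = s` for the switch point of the block `[s, e)` containing `n`. Within the block,
`Σ_e = Σ_s + M` with `M = ∑ φ_k φ_kᵀ`, and the block's contribution is `tr(M Σ_s⁻¹) = tr B` for
`B = Σ_s^{-1/2} M Σ_s^{-1/2} ⪰ 0`, while `det Σ_e / det Σ_s = det(1 + B) = ∏ (1 + ν_i)` over the
eigenvalues `ν_i ≥ 0` of `B`. The determinant hypothesis forces `∏ (1 + ν_i) ≤ 4`, so each
`ν_i ≤ 3`, and concavity of `log` on `[1, 4]` gives `ν ≤ 3 log(1 + ν)` there. Summing over the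
block bounds its contribution by `3 (log det Σ_e - log det Σ_s)`, and these telescope over blocks.
-/

open Matrix

open Finset in
theorem sum_Icc_le_sub_of_blocks {α : Type*} [AddCommGroup α] [PartialOrder α]
    [IsOrderedAddMonoid α] (σ : ℕ → ℕ) (hσ_le : ∀ n, σ n ≤ n) (hσ_pos : ∀ n, 1 ≤ n → 1 ≤ σ n)
    (hσ_mono : Monotone σ) (hσ_idem : ∀ n, σ (σ n) = σ n) (f : ℕ → ℕ → α) (L : ℕ → α) (N : ℕ)
    (hblock : ∀ n ∈ Icc 1 N, ∑ k ∈ Ico (σ n) (n + 1), f (σ n) k ≤ L (n + 1) - L (σ n)) :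
    ∑ n ∈ Icc 1 N, f (σ n) n ≤ L (N + 1) - L 1 := by
  induction N using Nat.strong_induction_on with
  | _ N ih =>
  rcases Nat.eq_zero_or_pos N with rfl | hN
  · simp
  set s := σ N
  have hs : 1 ≤ s ∧ s ≤ N := ⟨hσ_pos N hN, hσ_le N⟩
  -- all of `[s, N]` shares the switch point `s`, since `s = σ s ≤ σ n ≤ σ N = s`
  have hσ_block : ∀ n ∈ Ico s (N + 1), σ n = s := fun n hn => by
    have h1 := hσ_mono (mem_Ico.mp hn).1
    have h2 := hσ_mono (Nat.le_of_lt_succ (mem_Ico.mp hn).2)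
    rw [hσ_idem] at h1
    exact le_antisymm h2 h1
  have hprefix : ∑ n ∈ Ico 1 s, f (σ n) n ≤ L s - L 1 := by
    have := ih (s - 1) (by omega) fun n hn => hblock n (by simp at hn ⊢; omega)
    rwa [← Ico_add_one_right_eq_Icc, Nat.sub_add_cancel hs.1] at this
  have hlast : ∑ n ∈ Ico s (N + 1), f (σ n) n ≤ L (N + 1) - L s := by
    rw [sum_congr rfl fun n hn => by rw [hσ_block n hn]]
    exact hblock N (by simp; omega)
  calc ∑ n ∈ Icc 1 N, f (σ n) n
      = ∑ n ∈ Ico 1 s, f (σ n) n + ∑ n ∈ Ico s (N + 1), f (σ n) n := by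
        rw [sum_Ico_consecutive _ hs.1 (by omega), Ico_add_one_right_eq_Icc]
    _ ≤ (L s - L 1) + (L (N + 1) - L s) := add_le_add hprefix hlast
    _ = L (N + 1) - L 1 := by abel

theorem eq_add_sum_Ico_of_succ {M : Type*} [AddCommMonoid M] {a b : ℕ → M}
    (h : ∀ n, a (n + 1) = a n + b n) {s e : ℕ} (hse : s ≤ e) :
    a e = a s + ∑ k ∈ Finset.Ico s e, b k := by
  induction e, hse using Nat.le_induction with
  | base => simp
  | succ e he ih => rw [h, ih, Finset.sum_Ico_succ_top he, add_assoc]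

theorem le_three_mul_log_one_add {x : ℝ} (h0 : 0 ≤ x) (h3 : x ≤ 3) :
    x ≤ 3 * Real.log (1 + x) := by
  have hlog4 : 1 ≤ Real.log 4 := by
    rw [Real.le_log_iff_exp_le (by norm_num)]
    linarith [Real.exp_one_lt_d9]
  -- concavity of `log` on `[1, 4]`, at the point `1 + x = (1 - x/3) • 1 + (x/3) • 4`
  have hconc : x / 3 * Real.log 4 ≤ Real.log (1 + x) := by
    have := strictConcaveOn_log_Ioi.concaveOn.2 (show (1 : ℝ) ∈ Set.Ioi 0 by norm_num)
      (show (4 : ℝ) ∈ Set.Ioi 0 by norm_num) (show 0 ≤ 1 - x / 3 by linarith)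
      (show 0 ≤ x / 3 by linarith) (by ring)
    simp only [smul_eq_mul, Real.log_one, mul_zero, mul_one, zero_add] at this
    rwa [show 1 - x / 3 + x / 3 * 4 = 1 + x by ring] at this
  nlinarith

theorem sum_le_three_mul_log_prod_one_add {ι : Type*} (s : Finset ι) {x : ι → ℝ}
    (h0 : ∀ i ∈ s, 0 ≤ x i) (h4 : ∏ i ∈ s, (1 + x i) ≤ 4) :
    ∑ i ∈ s, x i ≤ 3 * Real.log (∏ i ∈ s, (1 + x i)) := by
  have h1 : ∀ i ∈ s, 1 ≤ 1 + x i := fun i hi => by linarith [h0 i hi]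
  have h3 : ∀ i ∈ s, x i ≤ 3 := fun i hi => by
    classical
    have hrest : 1 ≤ ∏ j ∈ s.erase i, (1 + x j) :=
      Finset.one_le_prod fun j hj => h1 j (Finset.mem_of_mem_erase hj)
    have := Finset.mul_prod_erase s (fun j => 1 + x j) hi
    nlinarith [h0 i hi]
  rw [Real.log_prod fun i hi => by linarith [h1 i hi], Finset.mul_sum]
  exact Finset.sum_le_sum fun i hi => le_three_mul_log_one_add (h0 i hi) (h3 i hi)

namespace Matrix

variable {n : Type*} [Fintype n]

theorem posSemidef_sum_vecMulVec_self {R ι : Type*} [CommRing R] [PartialOrder R] [StarRing R]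
    [StarOrderedRing R] [TrivialStar R] (s : Finset ι) (v : ι → n → R) :
    (∑ i ∈ s, vecMulVec (v i) (v i)).PosSemidef :=
  posSemidef_sum s fun i _ => by simpa using posSemidef_vecMulVec_self_star (v i)

variable [DecidableEq n]

theorem IsHermitian.det_one_add {B : Matrix n n ℝ} (hB : B.IsHermitian) :
    (1 + B).det = ∏ i, (1 + hB.eigenvalues i) := by
  conv_lhs =>
    rw [hB.spectral_theorem, ← map_one (Unitary.conjStarAlgAut ℝ _ hB.eigenvectorUnitary),
      ← map_add, Unitary.conjStarAlgAut_apply, det_mul_right_comm]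
  simp [← diagonal_one, diagonal_add, det_diagonal]

theorem PosSemidef.trace_le_three_mul_log_det_one_add {B : Matrix n n ℝ} (hB : B.PosSemidef)
    (h4 : (1 + B).det ≤ 4) : B.trace ≤ 3 * Real.log (1 + B).det := by
  rw [hB.isHermitian.det_one_add] at h4 ⊢
  rw [hB.isHermitian.trace_eq_sum_eigenvalues]
  exact sum_le_three_mul_log_prod_one_add _ (fun i _ => hB.eigenvalues_nonneg i) h4

open scoped MatrixOrder in
theorem PosDef.trace_mul_inv_le_three_mul_log_det_add {S M : Matrix n n ℝ} (hS : S.PosDef)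
    (hM : M.PosSemidef) (h4 : (S + M).det ≤ 4 * S.det) :
    (M * S⁻¹).trace ≤ 3 * (Real.log (S + M).det - Real.log S.det) := by
  set R := CFC.sqrt S
  have hR : R.PosDef := isStrictlyPositive_iff_posDef.mp
    (IsStrictlyPositive.sqrt S (isStrictlyPositive_iff_posDef.mpr hS))
  have hRR : R * R = S := CFC.sqrt_mul_sqrt_self S hS.posSemidef.nonneg
  have hRdet : IsUnit R.det := (isUnit_iff_isUnit_det R).mp hR.isUnit
  set B := R⁻¹ * M * R⁻¹
  have hB : B.PosSemidef := by
    simpa only [hR.inv.isHermitian.eq] using hM.conjTranspose_mul_mul_same R⁻¹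
  have htrace : (M * S⁻¹).trace = B.trace := by
    rw [← hRR, mul_inv_rev, ← Matrix.mul_assoc, trace_mul_comm]
    simp only [B, Matrix.mul_assoc]
  have hSM : S + M = R * (1 + B) * R := by
    simp only [B, Matrix.mul_add, Matrix.add_mul, Matrix.mul_one, ← Matrix.mul_assoc, hRR,
      mul_nonsing_inv _ hRdet, Matrix.one_mul, nonsing_inv_mul_cancel_right _ _ hRdet]
  have hdet : (S + M).det = S.det * (1 + B).det := by
    rw [hSM, det_mul_right_comm, hRR, det_mul]
  have hS0 := hS.det_pos
  have hB4 : (1 + B).det ≤ 4 := by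
    rw [hdet, mul_comm] at h4; exact le_of_mul_le_mul_right h4 hS0
  have hB0 : 0 < (1 + B).det := (PosDef.one.add_posSemidef hB).det_pos
  rw [htrace, hdet, Real.log_mul hS0.ne' hB0.ne', add_sub_cancel_left]
  exact hB.trace_le_three_mul_log_det_one_add hB4

theorem PosDef.sum_dotProduct_inv_mulVec_le {ι : Type*} {S : Matrix n n ℝ} (hS : S.PosDef)
    (s : Finset ι) (v : ι → n → ℝ)
    (h4 : (S + ∑ i ∈ s, vecMulVec (v i) (v i)).det ≤ 4 * S.det) :
    ∑ i ∈ s, v i ⬝ᵥ (S⁻¹ *ᵥ v i) ≤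
      3 * (Real.log (S + ∑ i ∈ s, vecMulVec (v i) (v i)).det - Real.log S.det) := by
  have htrace :
      ((∑ i ∈ s, vecMulVec (v i) (v i)) * S⁻¹).trace = ∑ i ∈ s, v i ⬝ᵥ (S⁻¹ *ᵥ v i) := by
    rw [trace_mul_comm, Finset.mul_sum, trace_sum]
    simp only [mul_vecMulVec, trace_vecMulVec, dotProduct_comm _ (v _)]
  rw [← htrace]
  exact hS.trace_mul_inv_le_three_mul_log_det_add (posSemidef_sum_vecMulVec_self s v) h4

end Matrix

theorem lazy_potential_argument_general (d N : ℕ) (lam : ℝ) (hlam : 1 ≤ lam)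
    (φ : ℕ → Fin d → ℝ)
    (Sig : ℕ → Matrix (Fin d) (Fin d) ℝ)
    (hSig1 : Sig 1 = lam • (1 : Matrix (Fin d) (Fin d) ℝ))
    (hSigrec : ∀ n, Sig (n + 1) = Sig n + Matrix.vecMulVec (φ n) (φ n))
    (σ : ℕ → ℕ)
    (hσ_le : ∀ n, σ n ≤ n) (hσ_pos : ∀ n, 1 ≤ n → 1 ≤ σ n)
    (hσ_mono : Monotone σ) (hσ_idem : ∀ n, σ (σ n) = σ n)
    (hdet : ∀ n ∈ Finset.Icc 1 N, (Sig (n + 1)).det ≤ 4 * (Sig (σ n)).det) :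
    ∑ n ∈ Finset.Icc 1 N, φ n ⬝ᵥ ((Sig (σ n))⁻¹ *ᵥ φ n) ≤
      3 * (Real.log (Sig (N + 1)).det - Real.log (Sig 1).det) := by
  have hSig_eq {s e : ℕ} (hse : s ≤ e) :
      Sig e = Sig s + ∑ k ∈ Finset.Ico s e, vecMulVec (φ k) (φ k) :=
    eq_add_sum_Ico_of_succ hSigrec hse
  have hpos {n : ℕ} (hn : 1 ≤ n) : (Sig n).PosDef := by
    rw [hSig_eq hn, hSig1]
    exact (PosDef.one.smul (by linarith)).add_posSemidef (posSemidef_sum_vecMulVec_self _ φ)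
  have hblock : ∀ n ∈ Finset.Icc 1 N,
      ∑ k ∈ Finset.Ico (σ n) (n + 1), φ k ⬝ᵥ ((Sig (σ n))⁻¹ *ᵥ φ k) ≤
        3 * Real.log (Sig (n + 1)).det - 3 * Real.log (Sig (σ n)).det := fun n hn => by
    have hsn : σ n ≤ n + 1 := (hσ_le n).trans n.le_succ
    have := (hpos (hσ_pos n (Finset.mem_Icc.mp hn).1)).sum_dotProduct_inv_mulVec_le _ φ
      (hSig_eq hsn ▸ hdet n hn)
    rwa [← hSig_eq hsn, mul_sub] at this
  rw [mul_sub]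
  exact sum_Icc_le_sub_of_blocks σ hσ_le hσ_pos hσ_mono hσ_idem
    (fun s k => φ k ⬝ᵥ ((Sig s)⁻¹ *ᵥ φ k)) (fun n => 3 * Real.log (Sig n).det) N hblock

/-- Potential argument with lazy covariance updates: the sum of quadratic forms
with respect to the lagged inverse covariances is bounded by three times the
log-determinant increase. -/
theorem lazy_potential_argument (d N : ℕ) (lam : ℝ) (hlam : 1 ≤ lam)
    (φ : ℕ → Fin d → ℝ) (hφ : ∀ n, ∑ i, (φ n i) ^ 2 ≤ 1)
    (Sig : ℕ → Matrix (Fin d) (Fin d) ℝ)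
    (hSig1 : Sig 1 = lam • (1 : Matrix (Fin d) (Fin d) ℝ))
    (hSigrec : ∀ n, Sig (n + 1) = Sig n + Matrix.vecMulVec (φ n) (φ n))
    (σ : ℕ → ℕ)
    (hσ_le : ∀ n, σ n ≤ n) (hσ_pos : ∀ n, 1 ≤ n → 1 ≤ σ n)
    (hσ_mono : Monotone σ) (hσ_idem : ∀ n, σ (σ n) = σ n)
    (hdet : ∀ n ∈ Finset.Icc 1 N, (Sig (n + 1)).det ≤ 4 * (Sig (σ n)).det) :
    ∑ n ∈ Finset.Icc 1 N, φ n ⬝ᵥ ((Sig (σ n))⁻¹ *ᵥ φ n) ≤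
      3 * (Real.log (Sig (N + 1)).det - Real.log (Sig 1).det) :=
  lazy_potential_argument_general d N lam hlam φ Sig hSig1 hSigrec σ hσ_le hσ_pos hσ_mono hσ_idem
    hdet
end
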